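/- arXiv:2305.09221 — 2 statements merged into one kernel-verified Lean document; each statement's English description precedes it below -/
import Mathlib

section
/- Chameleon hash collision extraction (discrete-log reduction core): with the setup above, if H(x, r) = H(x', r') for some x, x', r, r' ∈ ℤ/q with r ≠ r', then the secret key is recoverable as ξ = (x − x')·(r' − r)⁻¹ mod q. -/
/-! Since `g` has order `q`, the map `a ↦ g ^ a.val` is an injective homomorphism from
`(ZMod q, +)`, so the collision `g ^ x * (g ^ ξ) ^ r = g ^ x' * (g ^ ξ) ^ r'` becomes the linear
equation `x + ξ * r = x' + ξ * r'` in the field `ZMod q`, which is solved for `ξ` because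
`r' - r ≠ 0`. -/

section OrderOf

variable {G : Type*} {n : ℕ}

theorem pow_zmod_val_add [Monoid G] [NeZero n] {g : G} (hg : orderOf g = n) (a b : ZMod n) :
    g ^ (a + b).val = g ^ a.val * g ^ b.val := by
  subst hg
  rw [ZMod.val_add, pow_mod_orderOf, pow_add]

theorem pow_zmod_val_mul [Monoid G] {g : G} (hg : orderOf g = n) (a b : ZMod n) :
    g ^ (a * b).val = (g ^ a.val) ^ b.val := by
  subst hg
  rw [ZMod.val_mul, pow_mod_orderOf, pow_mul]

theorem pow_zmod_val_injective [LeftCancelMonoid G] [NeZero n] {g : G} (hg : orderOf g = n) :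
    Function.Injective fun a : ZMod n => g ^ a.val := by
  subst hg
  exact fun a b hab =>
    ZMod.val_injective _ <| (pow_eq_pow_iff_modEq.mp hab).eq_of_lt_of_lt a.val_lt b.val_lt

theorem pow_zmod_val_mul_pow_pow [Monoid G] [NeZero n] {g : G} (hg : orderOf g = n)
    (ξ x r : ZMod n) : g ^ x.val * (g ^ ξ.val) ^ r.val = g ^ (x + ξ * r).val := by
  rw [pow_zmod_val_add hg, pow_zmod_val_mul hg]

end OrderOf

theorem eq_sub_mul_inv_sub_of_add_mul_eq_add_mul {K : Type*} [Field K] {ξ x x' r r' : K}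
    (h : x + ξ * r = x' + ξ * r') (hne : r ≠ r') : ξ = (x - x') * (r' - r)⁻¹ := by
  rw [eq_mul_inv_iff_mul_eq₀ (sub_ne_zero.mpr hne.symm)]
  linear_combination -h

theorem chameleon_collision_extract_general (p q : ℕ) [Fact q.Prime]
    (g : (ZMod p)ˣ) (hg : orderOf g = q)
    (ξ : ZMod q) (y : (ZMod p)ˣ) (hy : y = g ^ ξ.val)
    (x x' r r' : ZMod q) (hcol : g ^ x.val * y ^ r.val = g ^ x'.val * y ^ r'.val)
    (hne : r ≠ r') :
    ξ = (x - x') * (r' - r)⁻¹ := by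
  subst hy
  rw [pow_zmod_val_mul_pow_pow hg, pow_zmod_val_mul_pow_pow hg] at hcol
  exact eq_sub_mul_inv_sub_of_add_mul_eq_add_mul (pow_zmod_val_injective hg hcol) hne

/-- Chameleon hash collision extraction: a collision `H(x,r) = H(x',r')` with
`r ≠ r'` reveals the secret key `ξ = (x − x')·(r' − r)⁻¹`. -/
theorem chameleon_collision_extract (p q : ℕ) [Fact p.Prime] [Fact q.Prime]
    (g : (ZMod p)ˣ) (hg : orderOf g = q)
    (ξ : ZMod q) (y : (ZMod p)ˣ) (hy : y = g ^ ξ.val)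
    (x x' r r' : ZMod q) (hcol : g ^ x.val * y ^ r.val = g ^ x'.val * y ^ r'.val)
    (hne : r ≠ r') :
    ξ = (x - x') * (r' - r)⁻¹ :=
  chameleon_collision_extract_general p q g hg ξ y hy x x' r r' hcol hne
end

section
/- Minimal cover size bound for revocation: in a complete binary tree with n = 2^h leaves, if r leaves are revoked (1 ≤ r ≤ n), there exists an exact cover of the remaining n − r leaves by at most r·h subtree roots (in fact at most r·log₂(n/r) + r, but the r·h bound suffices). -/
/-!
Let `T` be the set of revoked leaves and take for `R` the roots of the subtrees hanging off the
union of the paths from the root to `T`: the nodes off those paths whose parent lies on one. No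
such node is a prefix of another, the path to a surviving leaf leaves the paths to `T` at exactly
one of them, and no revoked leaf lies below any of them. Every node of `R` is the sibling of one
of the `h` non-root nodes on the path to some revoked leaf, so `R.card ≤ r * h`.
-/

open Finset

namespace List

/-- The sibling of the node at depth `k + 1` on the path to `w`; meaningful for `k < w.length`. -/
def pathSibling (w : List Bool) (k : ℕ) : List Bool :=
  w.take k ++ [!w.getD k false]

theorem length_pathSibling {w : List Bool} {k : ℕ} (hk : k < w.length) :
    (w.pathSibling k).length = k + 1 := by
  simp [pathSibling, hk.le]

theorem take_add_one_eq_pathSibling {u w : List Bool} {k : ℕ} (hku : k < u.length)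
    (hkw : k < w.length) (htake : u.take k = w.take k)
    (hne : u.take (k + 1) ≠ w.take (k + 1)) :
    u.take (k + 1) = w.pathSibling k := by
  rw [← take_concat_get' u k hku, ← take_concat_get' w k hkw, htake] at hne
  rw [← take_concat_get' u k hku, pathSibling, htake, getD_eq_getElem _ _ hkw]
  congr 2
  cases hu : u[k] <;> cases hw : w[k] <;> simp_all

end List

def hangingOff (T : Finset (List Bool)) : Finset (List Bool) :=
  (T.biUnion fun w => (range w.length).image w.pathSibling).filter fun d => ∀ w ∈ T, ¬ d <+: w

section hangingOff

variable {T : Finset (List Bool)}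

theorem mem_hangingOff {d : List Bool} :
    d ∈ hangingOff T ↔
      (∃ w ∈ T, ∃ k < w.length, w.pathSibling k = d) ∧ ∀ w ∈ T, ¬ d <+: w := by
  simp [hangingOff]

theorem card_hangingOff_le : (hangingOff T).card ≤ ∑ w ∈ T, w.length :=
  calc (hangingOff T).card
      ≤ (T.biUnion fun w => (range w.length).image w.pathSibling).card := card_filter_le _ _
    _ ≤ ∑ w ∈ T, ((range w.length).image w.pathSibling).card := card_biUnion_le
    _ ≤ ∑ w ∈ T, w.length := sum_le_sum fun _ _ => card_image_le.trans (card_range _).le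

theorem exists_length_le_of_mem_hangingOff {d : List Bool} (hd : d ∈ hangingOff T) :
    ∃ w ∈ T, d.length ≤ w.length := by
  obtain ⟨⟨w, hw, k, hk, rfl⟩, -⟩ := mem_hangingOff.mp hd
  exact ⟨w, hw, (List.length_pathSibling hk).le.trans hk⟩

theorem eq_of_prefix_of_mem_hangingOff {d₁ d₂ : List Bool} (hd₁ : d₁ ∈ hangingOff T)
    (hd₂ : d₂ ∈ hangingOff T) (hpre : d₁ <+: d₂) : d₁ = d₂ := by
  obtain ⟨⟨w, hw, k, -, rfl⟩, -⟩ := mem_hangingOff.mp hd₂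
  rcases List.prefix_concat_iff.mp hpre with heq | hpath
  · exact heq
  · exact absurd (hpath.trans (w.take_prefix k)) ((mem_hangingOff.mp hd₁).2 w hw)

theorem eq_of_mem_hangingOff_of_prefix {d₁ d₂ u : List Bool} (hd₁ : d₁ ∈ hangingOff T)
    (hd₂ : d₂ ∈ hangingOff T) (hp₁ : d₁ <+: u) (hp₂ : d₂ <+: u) : d₁ = d₂ := by
  rcases le_total d₁.length d₂.length with hl | hl
  · exact eq_of_prefix_of_mem_hangingOff hd₁ hd₂ (List.prefix_of_prefix_length_le hp₁ hp₂ hl)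
  · exact (eq_of_prefix_of_mem_hangingOff hd₂ hd₁ (List.prefix_of_prefix_length_le hp₂ hp₁ hl)).symm

theorem exists_mem_hangingOff_prefix (hT : T.Nonempty) {u : List Bool}
    (hlen : ∀ w ∈ T, u.length ≤ w.length) (hu : ∀ w ∈ T, ¬ u <+: w) :
    ∃ d ∈ hangingOff T, d <+: u := by
  classical
  -- the first depth at which the path to `u` leaves the paths to `T`
  have hex : ∃ k, ∀ w ∈ T, ¬ u.take k <+: w := ⟨u.length, by simpa using hu⟩
  obtain ⟨k, hk⟩ : ∃ k, Nat.find hex = k + 1 := by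
    refine Nat.exists_eq_add_one_of_ne_zero fun h0 => ?_
    obtain ⟨w₀, hw₀⟩ := hT
    exact Nat.find_spec hex w₀ hw₀ (by simp [h0])
  have hku : k < u.length := by
    have := Nat.find_min' hex (m := u.length) (by simpa using hu); omega
  obtain ⟨w, hw, hpre⟩ : ∃ w ∈ T, u.take k <+: w := by
    simpa using Nat.find_min hex (m := k) (by omega)
  have htake : u.take k = w.take k := by
    simpa [hku.le] using List.prefix_iff_eq_take.mp hpre
  have hleave : ∀ w ∈ T, ¬ u.take (k + 1) <+: w := hk ▸ Nat.find_spec hex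
  refine ⟨u.take (k + 1), mem_hangingOff.mpr ⟨⟨w, hw, k, hku.trans_le (hlen w hw), ?_⟩, hleave⟩,
    u.take_prefix _⟩
  refine (List.take_add_one_eq_pathSibling hku (hku.trans_le (hlen w hw)) htake ?_).symm
  exact fun heq => hleave w hw (heq ▸ w.take_prefix _)

end hangingOff

def leaves (h : ℕ) : Finset (List Bool) :=
  univ.image (List.Vector.toList (n := h))

theorem mem_leaves {h : ℕ} {u : List Bool} : u ∈ leaves h ↔ u.length = h :=
  ⟨fun hu => by obtain ⟨v, -, rfl⟩ := mem_image.mp hu; exact v.toList_length,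
    fun hu => mem_image.mpr ⟨⟨u, hu⟩, mem_univ _, rfl⟩⟩

theorem card_leaves (h : ℕ) : (leaves h).card = 2 ^ h := by
  rw [leaves, card_image_of_injective _ List.Vector.toList_injective, card_univ, card_vector,
    Fintype.card_bool]

/-- Minimal cover size bound for revocation: in the complete binary tree with
`n = 2^h` leaves, if `r = n − |S| ≥ 1` leaves are revoked, the remaining leaf
set `S` admits an exact cover by at most `r·h` subtree roots. -/
theorem revocation_cover_bound (h : ℕ) (S : Finset (List Bool))
    (hS : ∀ u ∈ S, u.length = h) (r : ℕ) (hr : r = 2 ^ h - S.card)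
    (hr1 : 1 ≤ r) :
    ∃ R : Finset (List Bool),
      (∀ d ∈ R, d.length ≤ h) ∧
      (∀ d₁ ∈ R, ∀ d₂ ∈ R, d₁ ≠ d₂ →
        ∀ u : List Bool, u.length = h → ¬ (d₁ <+: u ∧ d₂ <+: u)) ∧
      (∀ u : List Bool, u.length = h → ((∃ d ∈ R, d <+: u) ↔ u ∈ S)) ∧
      R.card ≤ r * h := by
  set T := leaves h \ S
  have hT : ∀ {w}, w ∈ T ↔ w.length = h ∧ w ∉ S := by simp [T, mem_leaves]
  have hTcard : T.card = r := by
    rw [card_sdiff_of_subset fun u hu => mem_leaves.mpr (hS u hu), card_leaves, hr]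
  refine ⟨hangingOff T, fun d hd => ?_, fun d₁ hd₁ d₂ hd₂ hne u _ hp => ?_, fun u hu => ?_, ?_⟩
  · obtain ⟨w, hw, hle⟩ := exists_length_le_of_mem_hangingOff hd
    exact hle.trans_eq (hT.mp hw).1
  · exact hne (eq_of_mem_hangingOff_of_prefix hd₁ hd₂ hp.1 hp.2)
  · have hlen : ∀ w ∈ T, u.length = w.length := fun w hw => hu.trans (hT.mp hw).1.symm
    constructor
    · rintro ⟨d, hd, hdu⟩
      by_contra huS
      exact (mem_hangingOff.mp hd).2 u (hT.mpr ⟨hu, huS⟩) hdu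
    · intro huS
      refine exists_mem_hangingOff_prefix (card_pos.mp (hTcard ▸ hr1))
        (fun w hw => (hlen w hw).le) fun w hw huw => ?_
      exact (hT.mp hw).2 (huw.eq_of_length (hlen w hw) ▸ huS)
  · calc (hangingOff T).card ≤ ∑ w ∈ T, w.length := card_hangingOff_le
      _ = r * h := by rw [sum_congr rfl fun w hw => (hT.mp hw).1, sum_const, smul_eq_mul, hTcard]
end
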